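/- arXiv:2502.07918 — 4 statements merged into one kernel-verified Lean document; each statement's English description precedes it below -/
import Mathlib

section
/- Marginalization of the chemical master equation (core of the Markovian projection theorem for stochastic reaction networks). Let d = d' + d'' and write states z = (z', z'') ∈ ℤ^{d'} × ℤ^{d''}; let the reaction network have J reactions with stoichiometric vectors ν_j = (ν_j', ν_j'') ∈ ℤ^{d'} × ℤ^{d''} and nonnegative propensities a_j : ℤ^d → ℝ. Let T > 0 and let p : ℤ^d × [0,T] → ℝ be nonnegative and satisfy: (i) for every t ∈ [0,T], the family (p(z,t))_{z∈ℤ^d} is summable and, for each j, the family (a_j(z) p(z,t))_{z∈ℤ^d} is summable; (ii) for every z, the map t ↦ p(z,t) is differentiable on [0,T] and satisfies the CME ∂_t p(z,t) = Σ_{j=1}^J a_j(z−ν_j) p(z−ν_j,t) − Σ_{j=1}^J a_j(z) p(z,t); (iii) for every z' ∈ ℤ^{d'} and t, the marginal q(z',t) := Σ_{z''∈ℤ^{d''}} p((z',z''),t) is differentiable in t with ∂_t q(z',t) = Σ_{z''∈ℤ^{d''}} ∂_t p((z',z''),t) (differentiation under the sum). Define the projected propensities ā_j(z',t) := (Σ_{z''∈ℤ^{d''}}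 a_j((z',z'')) p((z',z''),t)) / q(z',t) if q(z',t) > 0, and ā_j(z',t) := 0 otherwise. Then for all z' ∈ ℤ^{d'} and all t ∈ [0,T]: ∂_t q(z',t) = Σ_{j=1}^J ā_j(z'−ν_j',t) q(z'−ν_j',t) − Σ_{j=1}^J ā_j(z',t) q(z',t). That is, the marginal of a solution of the CME solves the CME of the projected network with propensities ā_j and stoichiometric vectors ν_j'. -/
/-!
Summing the CME over the fibre `{z'} × ℤ^{d''}` is legitimate term by term because every
`a_j p` is summable on `ℤ^d`. A translation by `ν_j` moves the fibre over `z'` onto the fibre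
over `z' - ν_j'`, so the gain term over `z'` is the fibre sum of `a_j p` over `z' - ν_j'`. By
construction `ā_j q` equals that fibre sum; when `q` vanishes, nonnegativity forces `p`, hence
the fibre sum of `a_j p`, to vanish too, so the convention `ā_j = 0` is harmless.
-/

open scoped BigOperators

/-- The projected (Markovian projection) propensity
`ā(z',t) = (Σ_{z''} a (z',z'') p((z',z''),t)) / q(z',t)` when `q(z',t) > 0`, else `0`. -/
noncomputable def projectedPropensity {σ τ : Type*} (a : σ × τ → ℝ)
    (p : σ × τ → ℝ → ℝ) (q : σ → ℝ → ℝ) (z' : σ) (t : ℝ) : ℝ :=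
  if 0 < q z' t then (∑' z'' : τ, a (z', z'') * p (z', z'') t) / q z' t else 0

noncomputable def marginal {σ τ : Type*} (f : σ × τ → ℝ) (z' : σ) : ℝ :=
  ∑' z'', f (z', z'')

theorem marginal_comp_sub {σ τ : Type*} [AddGroup σ] [AddGroup τ] (f : σ × τ → ℝ)
    (ν : σ × τ) (z' : σ) :
    marginal (fun z => f (z - ν)) z' = marginal f (z' - ν.1) :=
  (Equiv.subRight ν.2).tsum_eq fun z'' => f (z' - ν.1, z'')

theorem marginal_sum_sub_sum {σ τ ι : Type*} [AddGroup σ] [AddGroup τ] (s : Finset ι)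
    (f : ι → σ × τ → ℝ) (hf : ∀ i, Summable (f i)) (ν : ι → σ × τ) (z' : σ) :
    marginal (fun z => ∑ i ∈ s, f i (z - ν i) - ∑ i ∈ s, f i z) z'
      = ∑ i ∈ s, marginal (f i) (z' - (ν i).1) - ∑ i ∈ s, marginal (f i) z' := by
  have hshift : ∀ i, Summable fun z'' => f i ((z', z'') - ν i) := fun i =>
    ((hf i).comp_injective (Equiv.subRight (ν i)).injective).prod_factor z'
  have hfiber : ∀ i, Summable fun z'' => f i (z', z'') := fun i => (hf i).prod_factor z'
  unfold marginal
  rw [Summable.tsum_sub (summable_sum fun i _ => hshift i) (summable_sum fun i _ => hfiber i),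
    Summable.tsum_finsetSum fun i _ => hshift i, Summable.tsum_finsetSum fun i _ => hfiber i]
  congr 1
  exact Finset.sum_congr rfl fun i _ => marginal_comp_sub (f i) (ν i) z'

theorem projectedPropensity_mul_eq_marginal {σ τ : Type*} (a : σ × τ → ℝ) (p : σ × τ → ℝ → ℝ)
    (q : σ → ℝ → ℝ) (z' : σ) (t : ℝ) (hp : ∀ z'', 0 ≤ p (z', z'') t)
    (hsum : Summable fun z'' => p (z', z'') t) (hq : q z' t = ∑' z'', p (z', z'') t) :
    projectedPropensity a p q z' t * q z' t = marginal (fun z => a z * p z t) z' := by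
  by_cases hpos : 0 < q z' t
  · rw [projectedPropensity, if_pos hpos, div_mul_cancel₀ _ hpos.ne', marginal]
  · have hq0 : ∑' z'', p (z', z'') t = 0 :=
      hq ▸ le_antisymm (not_lt.mp hpos) (hq ▸ tsum_nonneg hp)
    have hp0 : (fun z'' => p (z', z'') t) = 0 :=
      (hasSum_zero_iff_of_nonneg hp).1 (hq0 ▸ hsum.hasSum)
    rw [projectedPropensity, if_neg hpos, zero_mul, marginal]
    simp only [fun z'' => congrFun hp0 z'', Pi.zero_apply, mul_zero, tsum_zero]

theorem marginalization_of_CME_general (d₁ d₂ J : ℕ)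
    (ν : Fin J → (Fin d₁ → ℤ) × (Fin d₂ → ℤ))
    (a : Fin J → (Fin d₁ → ℤ) × (Fin d₂ → ℤ) → ℝ)
    (T : ℝ)
    (p : (Fin d₁ → ℤ) × (Fin d₂ → ℤ) → ℝ → ℝ)
    (hp : ∀ z, ∀ t ∈ Set.Icc (0 : ℝ) T, 0 ≤ p z t)
    (hsum : ∀ t ∈ Set.Icc (0 : ℝ) T, Summable fun z => p z t)
    (hsum' : ∀ (j : Fin J), ∀ t ∈ Set.Icc (0 : ℝ) T, Summable fun z => a j z * p z t)
    (q : (Fin d₁ → ℤ) → ℝ → ℝ)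
    (hq : ∀ z' t, q z' t = ∑' z'' : Fin d₂ → ℤ, p (z', z'') t)
    (hqderiv : ∀ z', ∀ t ∈ Set.Icc (0 : ℝ) T,
      HasDerivAt (fun τ => q z' τ)
        (∑' z'' : Fin d₂ → ℤ,
          (∑ j, a j ((z', z'') - ν j) * p ((z', z'') - ν j) t
            - ∑ j, a j (z', z'') * p (z', z'') t)) t) :
    ∀ z', ∀ t ∈ Set.Icc (0 : ℝ) T,
      HasDerivAt (fun τ => q z' τ)
        (∑ j, projectedPropensity (a j) p q (z' - (ν j).1) t * q (z' - (ν j).1) t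
          - ∑ j, projectedPropensity (a j) p q z' t * q z' t) t := by
  intro z' t ht
  have hprojected : ∀ j w, projectedPropensity (a j) p q w t * q w t
      = marginal (fun z => a j z * p z t) w := fun j w =>
    projectedPropensity_mul_eq_marginal (a j) p q w t (fun _ => hp _ t ht)
      ((hsum t ht).prod_factor w) (hq w t)
  simp only [hprojected]
  rw [← marginal_sum_sub_sum Finset.univ _ (fun j => hsum' j t ht) ν z']
  exact hqderiv z' t ht

/-- **Marginalization of the chemical master equation.**
If `p` is a nonnegative, summable solution of the CME on `ℤ^{d'} × ℤ^{d''}` and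
differentiation under the sum is permitted for the marginal
`q(z',t) = Σ_{z''} p((z',z''),t)`, then `q` solves the CME of the projected network
with propensities `ā_j` and stoichiometric vectors `ν_j'`. -/
theorem marginalization_of_CME (d₁ d₂ J : ℕ)
    (ν : Fin J → (Fin d₁ → ℤ) × (Fin d₂ → ℤ))
    (a : Fin J → (Fin d₁ → ℤ) × (Fin d₂ → ℤ) → ℝ)
    (ha : ∀ j z, 0 ≤ a j z)
    (T : ℝ) (hT : 0 < T)
    (p : (Fin d₁ → ℤ) × (Fin d₂ → ℤ) → ℝ → ℝ)
    (hp : ∀ z, ∀ t ∈ Set.Icc (0 : ℝ) T, 0 ≤ p z t)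
    (hsum : ∀ t ∈ Set.Icc (0 : ℝ) T, Summable fun z => p z t)
    (hsum' : ∀ (j : Fin J), ∀ t ∈ Set.Icc (0 : ℝ) T, Summable fun z => a j z * p z t)
    (hCME : ∀ z, ∀ t ∈ Set.Icc (0 : ℝ) T,
      HasDerivAt (fun τ => p z τ)
        (∑ j, a j (z - ν j) * p (z - ν j) t - ∑ j, a j z * p z t) t)
    (q : (Fin d₁ → ℤ) → ℝ → ℝ)
    (hq : ∀ z' t, q z' t = ∑' z'' : Fin d₂ → ℤ, p (z', z'') t)
    (hqderiv : ∀ z', ∀ t ∈ Set.Icc (0 : ℝ) T,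
      HasDerivAt (fun τ => q z' τ)
        (∑' z'' : Fin d₂ → ℤ,
          (∑ j, a j ((z', z'') - ν j) * p ((z', z'') - ν j) t
            - ∑ j, a j (z', z'') * p (z', z'') t)) t) :
    ∀ z', ∀ t ∈ Set.Icc (0 : ℝ) T,
      HasDerivAt (fun τ => q z' τ)
        (∑ j, projectedPropensity (a j) p q (z' - (ν j).1) t * q (z' - (ν j).1) t
          - ∑ j, projectedPropensity (a j) p q z' t * q z' t) t :=
  marginalization_of_CME_general d₁ d₂ J ν a T p hp hsum hsum' q hq hqderiv
end

section
/- Marginalization of the filtering jump update. Let d = d₁ + d₂ and write x = (x', x'') ∈ ℤ^{d₁} × ℤ^{d₂}. Let 𝒪_k be a nonempty finite set of reaction indices, with stoichiometric vectors ν_j = (ν_j', ν_j'') ∈ ℤ^{d₁} × ℤ^{d₂} and nonnegative propensities a_j : ℤ^d → ℝ for j ∈ 𝒪_k. Let ρ⁻ : ℤ^d → ℝ be nonnegative with (ρ⁻(x))_x summable and (a_j(x)ρ⁻(x))_x summable for each j ∈ 𝒪_k. Define the jump update ρ(x) := (1/|𝒪_k|) Σ_{j∈𝒪_k} a_j(x−ν_j)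 ρ⁻(x−ν_j), the marginals ρ̃⁻(x') := Σ_{x''∈ℤ^{d₂}} ρ⁻((x',x'')) and ρ̃(x') := Σ_{x''∈ℤ^{d₂}} ρ((x',x'')), and ã_j(x') := (Σ_{x''} a_j((x',x'')) ρ⁻((x',x''))) / ρ̃⁻(x') if ρ̃⁻(x') > 0 and ã_j(x') := 0 otherwise. Then for every x' ∈ ℤ^{d₁}: ρ̃(x') = (1/|𝒪_k|) Σ_{j∈𝒪_k} ã_j(x'−ν_j') ρ̃⁻(x'−ν_j'). -/
/-
The marginal of the jump update is computed fibre by fibre: translating by `ν_j` maps the fibre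
over `x'` bijectively onto the fibre over `x' - ν_j'`, and on that fibre the projected propensity
times the marginal recovers `Σ_{x''} a_j ρ⁻`. When the marginal vanishes, the nonnegative and
summable fibre of `ρ⁻` vanishes identically, so the junk value `ã_j = 0` is harmless.
-/

open scoped BigOperators

/-- The filtered Markovian projection propensity at a fixed time:
`ã(x') = (Σ_{x''} a (x',x'') ρ⁻((x',x''))) / ρ̃⁻(x')` when `ρ̃⁻(x') > 0`, else `0`. -/
noncomputable def jumpProjectedPropensity {σ τ : Type*} (a : σ × τ → ℝ)
    (ρ : σ × τ → ℝ) (ρm : σ → ℝ) (x' : σ) : ℝ :=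
  if 0 < ρm x' then (∑' x'' : τ, a (x', x'') * ρ (x', x'')) / ρm x' else 0

theorem jumpProjectedPropensity_mul_of_tsum_eq {σ τ : Type*} (a ρ : σ × τ → ℝ) (ρm : σ → ℝ)
    (x' : σ) (hρ : ∀ x'', 0 ≤ ρ (x', x'')) (hsum : Summable fun x'' => ρ (x', x''))
    (hρm : ρm x' = ∑' x'', ρ (x', x'')) :
    jumpProjectedPropensity a ρ ρm x' * ρm x' = ∑' x'', a (x', x'') * ρ (x', x'') := by
  unfold jumpProjectedPropensity
  split_ifs with hpos
  · exact div_mul_cancel₀ _ hpos.ne'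
  · have hρm_zero : ρm x' = 0 := le_antisymm (not_lt.mp hpos) (hρm ▸ tsum_nonneg hρ)
    rw [hρm] at hρm_zero
    have hfibre_zero : (fun x'' => ρ (x', x'')) = 0 :=
      (hasSum_zero_iff_of_nonneg hρ).mp (hρm_zero ▸ hsum.hasSum)
    simp [funext_iff.mp hfibre_zero]

section Translation

variable {σ τ α : Type*} [AddGroup σ] [AddGroup τ]

theorem tsum_prod_mk_sub [AddCommMonoid α] [TopologicalSpace α] (f : σ × τ → α) (x' : σ)
    (v : σ × τ) :
    ∑' x'', f ((x', x'') - v) = ∑' y'', f (x' - v.1, y'') :=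
  (Equiv.subRight v.2).tsum_eq fun y'' => f (x' - v.1, y'')

variable [AddCommGroup α] [UniformSpace α] [IsUniformAddGroup α] [CompleteSpace α]

theorem Summable.prod_mk_sub {f : σ × τ → α} (hf : Summable f) (x' : σ) (v : σ × τ) :
    Summable fun x'' => f ((x', x'') - v) :=
  (Equiv.subRight v.2).summable_iff.mpr (hf.prod_factor (x' - v.1))

theorem tsum_prod_mk_finsetSum_sub [T2Space α] {ι : Type*} (s : Finset ι)
    (ν : ι → σ × τ) (g : ι → σ × τ → α) (hg : ∀ j ∈ s, Summable (g j)) (x' : σ) :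
    ∑' x'', ∑ j ∈ s, g j ((x', x'') - ν j) = ∑ j ∈ s, ∑' y'', g j (x' - (ν j).1, y'') := by
  rw [Summable.tsum_finsetSum fun j hj => (hg j hj).prod_mk_sub x' (ν j)]
  exact Finset.sum_congr rfl fun j _ => tsum_prod_mk_sub (g j) x' (ν j)

end Translation

theorem marginalization_of_jump_update_general (d₁ d₂ : ℕ) {ι : Type*}
    (𝒪k : Finset ι)
    (ν : ι → (Fin d₁ → ℤ) × (Fin d₂ → ℤ))
    (a : ι → (Fin d₁ → ℤ) × (Fin d₂ → ℤ) → ℝ)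
    (ρminus : (Fin d₁ → ℤ) × (Fin d₂ → ℤ) → ℝ)
    (hρminus : ∀ x, 0 ≤ ρminus x)
    (hsum : Summable ρminus)
    (hsum' : ∀ j ∈ 𝒪k, Summable fun x => a j x * ρminus x)
    (ρ : (Fin d₁ → ℤ) × (Fin d₂ → ℤ) → ℝ)
    (hρ : ∀ x, ρ x = (𝒪k.card : ℝ)⁻¹ * ∑ j ∈ 𝒪k, a j (x - ν j) * ρminus (x - ν j))
    (ρmMinus : (Fin d₁ → ℤ) → ℝ)
    (hρmMinus : ∀ x', ρmMinus x' = ∑' x'' : Fin d₂ → ℤ, ρminus (x', x''))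
    (ρm : (Fin d₁ → ℤ) → ℝ)
    (hρm : ∀ x', ρm x' = ∑' x'' : Fin d₂ → ℤ, ρ (x', x'')) :
    ∀ x' : Fin d₁ → ℤ,
      ρm x' = (𝒪k.card : ℝ)⁻¹ * ∑ j ∈ 𝒪k,
        jumpProjectedPropensity (a j) ρminus ρmMinus (x' - (ν j).1)
          * ρmMinus (x' - (ν j).1) := by
  intro x'
  simp only [hρm, hρ, tsum_mul_left]
  rw [tsum_prod_mk_finsetSum_sub 𝒪k ν (fun j x => a j x * ρminus x) hsum' x']
  congr 1
  refine Finset.sum_congr rfl fun j _ => ?_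
  exact (jumpProjectedPropensity_mul_of_tsum_eq (a j) ρminus ρmMinus _
    (fun _ => hρminus _) (hsum.prod_factor _) (hρmMinus _)).symm

/-- **Marginalization of the filtering jump update.**
If the unnormalized conditional PMF is updated at an observation jump by
`ρ(x) = (1/|𝒪_k|) Σ_{j∈𝒪_k} a_j(x−ν_j) ρ⁻(x−ν_j)`, then its marginal satisfies the
corresponding jump update of the projected network with propensities `ã_j` and
stoichiometric vectors `ν_j'`. -/
theorem marginalization_of_jump_update (d₁ d₂ : ℕ) {ι : Type*}
    (𝒪k : Finset ι) (h𝒪k : 𝒪k.Nonempty)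
    (ν : ι → (Fin d₁ → ℤ) × (Fin d₂ → ℤ))
    (a : ι → (Fin d₁ → ℤ) × (Fin d₂ → ℤ) → ℝ)
    (ha : ∀ j ∈ 𝒪k, ∀ x, 0 ≤ a j x)
    (ρminus : (Fin d₁ → ℤ) × (Fin d₂ → ℤ) → ℝ)
    (hρminus : ∀ x, 0 ≤ ρminus x)
    (hsum : Summable ρminus)
    (hsum' : ∀ j ∈ 𝒪k, Summable fun x => a j x * ρminus x)
    (ρ : (Fin d₁ → ℤ) × (Fin d₂ → ℤ) → ℝ)
    (hρ : ∀ x, ρ x = (𝒪k.card : ℝ)⁻¹ * ∑ j ∈ 𝒪k, a j (x - ν j) * ρminus (x - ν j))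
    (ρmMinus : (Fin d₁ → ℤ) → ℝ)
    (hρmMinus : ∀ x', ρmMinus x' = ∑' x'' : Fin d₂ → ℤ, ρminus (x', x''))
    (ρm : (Fin d₁ → ℤ) → ℝ)
    (hρm : ∀ x', ρm x' = ∑' x'' : Fin d₂ → ℤ, ρ (x', x'')) :
    ∀ x' : Fin d₁ → ℤ,
      ρm x' = (𝒪k.card : ℝ)⁻¹ * ∑ j ∈ 𝒪k,
        jumpProjectedPropensity (a j) ρminus ρmMinus (x' - (ν j).1)
          * ρmMinus (x' - (ν j).1) :=
  marginalization_of_jump_update_general d₁ d₂ 𝒪k ν a ρminus hρminus hsum hsum' ρ hρ ρmMinus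
    hρmMinus ρm hρm
end

section
/- Perturbation bound for the nonlinear normalization term of the filtering equation. Let S be a countable type, let C ≥ 0, let α, α' : S → ℝ be bounded functions with sup_{s∈S} |α(s)| ≤ C, and let π, π' : S → ℝ be summable with Σ_s |π(s)| = Σ_s |π'(s)| = 1. Write ⟨α,π⟩ := Σ_{s∈S} α(s) π(s) and ‖α−α'‖_∞ := sup_{s∈S} |α(s)−α'(s)|. Then Σ_{s∈S} | ⟨α,π⟩ π(s) − ⟨α',π'⟩ π'(s) | ≤ 2C · Σ_{s∈S} |π(s)−π'(s)| + ‖α−α'‖_∞. -/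
open scoped BigOperators

lemma abs_tsum_le' {S : Type*} {f : S → ℝ} (hf : Summable f) :
    |∑' s, f s| ≤ ∑' s, |f s| := by
  simpa [Real.norm_eq_abs] using
    norm_tsum_le_tsum_norm (by simpa [Real.norm_eq_abs] using hf.abs :
      Summable fun s => ‖f s‖)

/-- **Perturbation bound for the nonlinear normalization term of the filtering equation.**
For bounded `α, α'` with `sup_s |α(s)| ≤ C` and summable `π, π'` of ℓ¹-norm one,
`Σ_s |⟨α,π⟩π(s) − ⟨α',π'⟩π'(s)| ≤ 2C Σ_s |π(s)−π'(s)| + ‖α−α'‖_∞`. -/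
theorem normalization_term_perturbation_bound (S : Type*) [Countable S]
    (C : ℝ) (hC : 0 ≤ C)
    (α α' : S → ℝ)
    (hα : ∀ s, |α s| ≤ C)
    (hα' : ∃ C', ∀ s, |α' s| ≤ C')
    (π π' : S → ℝ) (hπ : Summable π) (hπ' : Summable π')
    (hπ1 : ∑' s, |π s| = 1) (hπ'1 : ∑' s, |π' s| = 1) :
    ∑' s, |(∑' u, α u * π u) * π s - (∑' u, α' u * π' u) * π' s|
      ≤ 2 * C * ∑' s, |π s - π' s| + ⨆ s, |α s - α' s| := by
  obtain ⟨C', hC'⟩ := hα'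
  have hS : Nonempty S := by
    by_contra h
    rw [not_nonempty_iff] at h
    rw [tsum_empty] at hπ1
    norm_num at hπ1
  have hbdd : BddAbove (Set.range fun s => |α s - α' s|) := by
    refine ⟨C + C', ?_⟩
    rintro x ⟨s, rfl⟩
    calc |α s - α' s| ≤ |α s| + |α' s| := abs_sub _ _
      _ ≤ C + C' := add_le_add (hα s) (hC' s)
  have hMle : ∀ s, |α s - α' s| ≤ ⨆ s, |α s - α' s| := fun s => le_ciSup hbdd s
  set M : ℝ := ⨆ s, |α s - α' s| with hMdef
  set A : ℝ := ∑' u, α u * π u with hA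
  set A' : ℝ := ∑' u, α' u * π' u with hA'
  have habsπ : Summable fun s => |π s| := hπ.abs
  have habsπ' : Summable fun s => |π' s| := hπ'.abs
  have hd : Summable fun s => |π s - π' s| := (hπ.sub hπ').abs
  set D : ℝ := ∑' s, |π s - π' s| with hDdef
  have hsum1 : Summable fun u => α u * π u := by
    refine Summable.of_norm_bounded (habsπ.mul_left C) fun u => ?_
    rw [Real.norm_eq_abs, abs_mul]
    exact mul_le_mul_of_nonneg_right (hα u) (abs_nonneg _)
  have hsum2 : Summable fun u => α' u * π' u := by
    refine Summable.of_norm_bounded (habsπ'.mul_left C') fun u => ?_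
    rw [Real.norm_eq_abs, abs_mul]
    exact mul_le_mul_of_nonneg_right (hC' u) (abs_nonneg _)
  have hAbd : |A| ≤ C := by
    calc |A| ≤ ∑' u, |α u * π u| := abs_tsum_le' hsum1
      _ ≤ ∑' u, C * |π u| := by
          refine Summable.tsum_le_tsum (fun u => ?_) hsum1.abs (habsπ.mul_left C)
          rw [abs_mul]
          exact mul_le_mul_of_nonneg_right (hα u) (abs_nonneg _)
      _ = C := by rw [tsum_mul_left, hπ1, mul_one]
  have hAA' : |A - A'| ≤ C * D + M := by
    have heq : A - A' = ∑' u, (α u * π u - α' u * π' u) := (Summable.tsum_sub hsum1 hsum2).symm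
    have hsub : Summable fun u => α u * π u - α' u * π' u := hsum1.sub hsum2
    have hptwise : ∀ u, |α u * π u - α' u * π' u|
        ≤ C * |π u - π' u| + M * |π' u| := by
      intro u
      have h1 : α u * π u - α' u * π' u = α u * (π u - π' u) + (α u - α' u) * π' u := by
        ring
      rw [h1]
      calc |α u * (π u - π' u) + (α u - α' u) * π' u|
          ≤ |α u * (π u - π' u)| + |(α u - α' u) * π' u| := abs_add_le _ _
        _ ≤ C * |π u - π' u| + M * |π' u| := by
            rw [abs_mul, abs_mul]
            exact add_le_add (mul_le_mul_of_nonneg_right (hα u) (abs_nonneg _))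
              (mul_le_mul_of_nonneg_right (hMle u) (abs_nonneg _))
    calc |A - A'| ≤ ∑' u, |α u * π u - α' u * π' u| := by
          rw [heq]; exact abs_tsum_le' hsub
      _ ≤ ∑' u, (C * |π u - π' u| + M * |π' u|) :=
          Summable.tsum_le_tsum hptwise hsub.abs ((hd.mul_left C).add (habsπ'.mul_left M))
      _ = C * D + M := by
          rw [Summable.tsum_add (hd.mul_left C) (habsπ'.mul_left M), tsum_mul_left,
            tsum_mul_left, hπ'1, mul_one]
  have hptw : ∀ s, |A * π s - A' * π' s| ≤ C * |π s - π' s| + (C * D + M) * |π' s| := by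
    intro s
    have h1 : A * π s - A' * π' s = A * (π s - π' s) + (A - A') * π' s := by ring
    rw [h1]
    calc |A * (π s - π' s) + (A - A') * π' s|
        ≤ |A * (π s - π' s)| + |(A - A') * π' s| := abs_add_le _ _
      _ ≤ C * |π s - π' s| + (C * D + M) * |π' s| := by
          rw [abs_mul, abs_mul]
          exact add_le_add (mul_le_mul_of_nonneg_right hAbd (abs_nonneg _))
            (mul_le_mul_of_nonneg_right hAA' (abs_nonneg _))
  have hsumrhs : Summable fun s => C * |π s - π' s| + (C * D + M) * |π' s| :=
    (hd.mul_left C).add (habsπ'.mul_left (C * D + M))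
  have hsumlhs : Summable fun s => |A * π s - A' * π' s| :=
    hsumrhs.of_nonneg_of_le (fun s => abs_nonneg _) hptw
  calc ∑' s, |A * π s - A' * π' s|
      ≤ ∑' s, (C * |π s - π' s| + (C * D + M) * |π' s|) :=
        Summable.tsum_le_tsum hptw hsumlhs hsumrhs
    _ = C * D + (C * D + M) := by
        rw [Summable.tsum_add (hd.mul_left C) (habsπ'.mul_left (C * D + M)), tsum_mul_left,
          tsum_mul_left, hπ'1, mul_one]
    _ = 2 * C * D + M := by ring
end

section
/- Grönwall sensitivity estimate for the normalized filtering equation between observation jumps (deterministic form of the sensitivity theorem). Let S be a countable type and work in ℓ¹(S). Let a < b, C ≥ 0, δ ≥ 0. For each s ∈ [a,b] let A(s), A^ε(s) : ℓ¹(S) → ℓ¹(S) be bounded linear operators and α(s), α^ε(s) : S → ℝ bounded functions, satisfying for all s ∈ [a,b]: ‖A(s)‖ ≤ 2C, ‖α(s)‖_∞ ≤ C, ‖A(s) − A^ε(s)‖ ≤ δ and ‖α(s) − α^ε(s)‖_∞ ≤ δ. Let π, π^ε : [a,b] → ℓ¹(S) be continuous with ‖π(s)‖₁ = ‖π^ε(s)‖₁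 = 1 for all s, such that s ↦ A(s)π(s) + ⟨α(s),π(s)⟩π(s) and s ↦ A^ε(s)π^ε(s) + ⟨α^ε(s),π^ε(s)⟩π^ε(s) are Bochner integrable on [a,b] and for all t ∈ [a,b]: π(t) = π(a) + ∫_a^t ( A(s)π(s) + ⟨α(s),π(s)⟩ π(s) ) ds and π^ε(t) = π^ε(a) + ∫_a^t ( A^ε(s)π^ε(s) + ⟨α^ε(s),π^ε(s)⟩ π^ε(s) ) ds. Then for all t ∈ [a,b]: ‖π(t) − π^ε(t)‖₁ ≤ ( ‖π(a) − π^ε(a)‖₁ + 2δ(t−a) ) · exp( 4C (t−a) ). -/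
open scoped BigOperators
open MeasureTheory

set_option maxHeartbeats 1000000

section helpers
variable {S : Type*}

lemma l1_norm_eq (f : lp (fun _ : S => ℝ) 1) : ‖f‖ = ∑' u, |f u| := by
  have h := lp.hasSum_norm (p := 1) (by norm_num) f
  simp only [ENNReal.toReal_one, Real.rpow_one, Real.norm_eq_abs] at h
  exact h.tsum_eq.symm

lemma l1_summable_abs (f : lp (fun _ : S => ℝ) 1) : Summable (fun u => |f u|) := by
  have h := (lp.memℓp f).summable (p := 1) (by norm_num)
  simpa [Real.rpow_one] using h

lemma l1_summable_mul {g : S → ℝ} {M : ℝ} (hg : ∀ u, |g u| ≤ M)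
    (f : lp (fun _ : S => ℝ) 1) : Summable (fun u => g u * f u) := by
  refine Summable.of_norm_bounded ((l1_summable_abs f).mul_left M) ?_
  intro u
  rw [Real.norm_eq_abs, abs_mul]
  exact mul_le_mul_of_nonneg_right (hg u) (abs_nonneg _)

lemma l1_tsum_bound {g : S → ℝ} {M : ℝ} (hg : ∀ u, |g u| ≤ M)
    (f : lp (fun _ : S => ℝ) 1) : |∑' u, g u * f u| ≤ M * ‖f‖ := by
  have hs : Summable (fun u => g u * f u) := l1_summable_mul hg f
  have h1 : Summable (fun u => |g u * f u|) := hs.abs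
  have hle : ∀ u, |g u * f u| ≤ M * |f u| := by
    intro u
    rw [abs_mul]
    exact mul_le_mul_of_nonneg_right (hg u) (abs_nonneg _)
  have h2 : |∑' u, g u * f u| ≤ ∑' u, |g u * f u| := by
    have := norm_tsum_le_tsum_norm (f := fun u => g u * f u)
      (by simpa [Real.norm_eq_abs, abs_mul] using h1)
    simpa [Real.norm_eq_abs, abs_mul] using this
  have h3 : (∑' u, |g u * f u|) ≤ ∑' u, M * |f u| :=
    Summable.tsum_le_tsum hle h1 ((l1_summable_abs f).mul_left M)
  have h4 : (∑' u, M * |f u|) = M * ‖f‖ := by rw [tsum_mul_left, l1_norm_eq]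
  linarith

lemma exp_aux {y : ℝ} (hy : 0 ≤ y) : Real.exp y - 1 ≤ y * Real.exp y := by
  have h1 : (-y) + 1 ≤ Real.exp (-y) := Real.add_one_le_exp _
  have h2 : (0:ℝ) < Real.exp y := Real.exp_pos y
  have h3 : Real.exp (-y) * Real.exp y = 1 := by
    rw [← Real.exp_add]; simp
  nlinarith

lemma decomp_aux {E : Type*} [NormedAddCommGroup E] [NormedSpace ℝ E]
    (T Tε : E →L[ℝ] E) (p q : E) (c cε : ℝ) :
    (T p + c • p) - (Tε q + cε • q) =
      T (p - q) + ((T - Tε) q + (c • (p - q) + (c - cε) • q)) := by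
  simp only [map_sub, ContinuousLinearMap.sub_apply, smul_sub, sub_smul]
  abel

end helpers


/-- **Grönwall sensitivity estimate for the normalized filtering equation between
observation jumps** (deterministic form). If the true and perturbed normalized filtering
distributions `π, π^ε : [a,b] → ℓ¹(S)` both satisfy the integral form of
`dπ/dt = A(t)π + ⟨α(t),π⟩π` with `‖A(s)‖ ≤ 2C`, `‖α(s)‖_∞ ≤ C`,
`‖A(s) − A^ε(s)‖ ≤ δ`, `‖α(s) − α^ε(s)‖_∞ ≤ δ`, then
`‖π(t) − π^ε(t)‖₁ ≤ (‖π(a) − π^ε(a)‖₁ + 2δ(t−a)) exp(4C(t−a))`. -/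
theorem filtering_gronwall_sensitivity (S : Type*) [Countable S]
    (a b : ℝ) (hab : a < b) (C δ : ℝ) (hC : 0 ≤ C) (hδ : 0 ≤ δ)
    (A Aε : ℝ → (lp (fun _ : S => ℝ) 1 →L[ℝ] lp (fun _ : S => ℝ) 1))
    (α αε : ℝ → S → ℝ)
    (hA : ∀ s ∈ Set.Icc a b, ‖A s‖ ≤ 2 * C)
    (hα : ∀ s ∈ Set.Icc a b, ∀ u, |α s u| ≤ C)
    (hαε_bdd : ∀ s ∈ Set.Icc a b, ∃ C', ∀ u, |αε s u| ≤ C')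
    (hAdiff : ∀ s ∈ Set.Icc a b, ‖A s - Aε s‖ ≤ δ)
    (hαdiff : ∀ s ∈ Set.Icc a b, ∀ u, |α s u - αε s u| ≤ δ)
    (π πε : ℝ → lp (fun _ : S => ℝ) 1)
    (hπcont : ContinuousOn π (Set.Icc a b))
    (hπεcont : ContinuousOn πε (Set.Icc a b))
    (hπnorm : ∀ s ∈ Set.Icc a b, ‖π s‖ = 1)
    (hπεnorm : ∀ s ∈ Set.Icc a b, ‖πε s‖ = 1)
    (hπint : IntervalIntegrable
      (fun s => A s (π s) + (∑' u, α s u * π s u) • π s) volume a b)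
    (hπεint : IntervalIntegrable
      (fun s => Aε s (πε s) + (∑' u, αε s u * πε s u) • πε s) volume a b)
    (hπeq : ∀ t ∈ Set.Icc a b,
      π t = π a + ∫ s in a..t, (A s (π s) + (∑' u, α s u * π s u) • π s))
    (hπεeq : ∀ t ∈ Set.Icc a b,
      πε t = πε a + ∫ s in a..t, (Aε s (πε s) + (∑' u, αε s u * πε s u) • πε s)) :
    ∀ t ∈ Set.Icc a b,
      ‖π t - πε t‖ ≤ (‖π a - πε a‖ + 2 * δ * (t - a)) * Real.exp (4 * C * (t - a)) := by
  set F : ℝ → lp (fun _ : S => ℝ) 1 :=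
    fun s => A s (π s) + (∑' u, α s u * π s u) • π s with hF
  set Fε : ℝ → lp (fun _ : S => ℝ) 1 :=
    fun s => Aε s (πε s) + (∑' u, αε s u * πε s u) • πε s with hFε
  set φ : ℝ → ℝ := fun s => ‖π s - πε s‖ with hφ
  have hφcont : ContinuousOn φ (Set.Icc a b) := (hπcont.sub hπεcont).norm
  have hφnonneg : ∀ s, 0 ≤ φ s := fun s => norm_nonneg _
  set g : ℝ → ℝ := fun s => 4 * C * φ s + 2 * δ with hg
  have hgcont : ContinuousOn g (Set.Icc a b) :=
    ((continuousOn_const.mul hφcont).add continuousOn_const)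
  -- Key pointwise estimate
  have hkey : ∀ s ∈ Set.Icc a b, ‖F s - Fε s‖ ≤ g s := by
    intro s hs
    set p := π s
    set q := πε s
    set d := p - q
    set c : ℝ := ∑' u, α s u * p u with hc
    set cε : ℝ := ∑' u, αε s u * q u with hcε
    have hpnorm : ‖p‖ = 1 := hπnorm s hs
    have hqnorm : ‖q‖ = 1 := hπεnorm s hs
    have hdnorm : ‖d‖ = φ s := rfl
    obtain ⟨C', hC'⟩ := hαε_bdd s hs
    -- decomposition
    have hdecomp : F s - Fε s =
        (A s) d + ((A s - Aε s) q + (c • d + (c - cε) • q)) :=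
      decomp_aux (A s) (Aε s) p q c cε
    -- term bounds
    have hb1 : ‖(A s) d‖ ≤ 2 * C * φ s := by
      calc ‖(A s) d‖ ≤ ‖A s‖ * ‖d‖ := (A s).le_opNorm d
        _ ≤ 2 * C * φ s := by
            rw [hdnorm]
            exact mul_le_mul_of_nonneg_right (hA s hs) (hφnonneg s)
    have hb2 : ‖(A s - Aε s) q‖ ≤ δ := by
      calc ‖(A s - Aε s) q‖ ≤ ‖A s - Aε s‖ * ‖q‖ := (A s - Aε s).le_opNorm q
        _ ≤ δ := by rw [hqnorm, mul_one]; exact hAdiff s hs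
    have hcbound : |c| ≤ C := by
      have := l1_tsum_bound (hα s hs) p
      rwa [hpnorm, mul_one] at this
    have hb3 : ‖c • d‖ ≤ C * φ s := by
      rw [norm_smul, Real.norm_eq_abs, hdnorm]
      exact mul_le_mul_of_nonneg_right hcbound (hφnonneg s)
    -- bound on c - cε
    have hsum_ap : Summable (fun u => α s u * p u) := l1_summable_mul (hα s hs) p
    have hsum_aq : Summable (fun u => α s u * q u) := l1_summable_mul (hα s hs) q
    have hsum_aεq : Summable (fun u => αε s u * q u) := l1_summable_mul hC' q
    have hd_coe : ∀ u, d u = p u - q u := by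
      intro u
      simp [d, lp.coeFn_sub]
    have e1 : (∑' u, α s u * d u) = c - ∑' u, α s u * q u := by
      rw [hc, ← Summable.tsum_sub hsum_ap hsum_aq]
      congr 1
      funext u
      rw [hd_coe u, mul_sub]
    have e2 : (∑' u, (α s u - αε s u) * q u) = (∑' u, α s u * q u) - cε := by
      rw [hcε, ← Summable.tsum_sub hsum_aq hsum_aεq]
      congr 1
      funext u
      rw [sub_mul]
    have hcdiff : |c - cε| ≤ C * φ s + δ := by
      have hsplit : c - cε = (∑' u, α s u * d u) + ∑' u, (α s u - αε s u) * q u := by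
        rw [e1, e2]; ring
      have t1 : |∑' u, α s u * d u| ≤ C * φ s := by
        have := l1_tsum_bound (hα s hs) d
        rwa [hdnorm] at this
      have t2 : |∑' u, (α s u - αε s u) * q u| ≤ δ := by
        have := l1_tsum_bound (hαdiff s hs) q
        rwa [hqnorm, mul_one] at this
      calc |c - cε| = |(∑' u, α s u * d u) + ∑' u, (α s u - αε s u) * q u| := by
            rw [hsplit]
        _ ≤ |∑' u, α s u * d u| + |∑' u, (α s u - αε s u) * q u| := abs_add_le _ _
        _ ≤ C * φ s + δ := add_le_add t1 t2
    have hb4 : ‖(c - cε) • q‖ ≤ C * φ s + δ := by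
      rw [norm_smul, Real.norm_eq_abs, hqnorm, mul_one]
      exact hcdiff
    calc ‖F s - Fε s‖ = ‖(A s) d + ((A s - Aε s) q + (c • d + (c - cε) • q))‖ := by
          rw [hdecomp]
      _ ≤ ‖(A s) d‖ + (‖(A s - Aε s) q‖ + (‖c • d‖ + ‖(c - cε) • q‖)) := by
          refine (norm_add_le _ _).trans (add_le_add_right ((norm_add_le _ _).trans
            (add_le_add_right (norm_add_le _ _) _)) _)
      _ ≤ 2 * C * φ s + (δ + (C * φ s + (C * φ s + δ))) :=
          add_le_add hb1 (add_le_add hb2 (add_le_add hb3 hb4))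
      _ = g s := by rw [hg]; ring
  -- integrability of the difference
  have hFint : IntervalIntegrable (fun s => F s - Fε s) volume a b := hπint.sub hπεint
  -- Step B : integral inequality
  have hstepB : ∀ t ∈ Set.Icc a b, φ t ≤ φ a + ∫ s in a..t, g s := by
    intro t ht
    have hat : a ≤ t := ht.1
    have hsub : Set.uIcc a t ⊆ Set.uIcc a b := by
      rw [Set.uIcc_of_le hat, Set.uIcc_of_le hab.le]
      exact Set.Icc_subset_Icc le_rfl ht.2
    have hFi : IntervalIntegrable F volume a t := hπint.mono_set hsub
    have hFεi : IntervalIntegrable Fε volume a t := hπεint.mono_set hsub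
    have heq : π t - πε t = (π a - πε a) + ∫ s in a..t, (F s - Fε s) := by
      rw [intervalIntegral.integral_sub hFi hFεi, hπeq t ht, hπεeq t ht]
      abel
    have hnormint : IntervalIntegrable (fun s => ‖F s - Fε s‖) volume a t :=
      (hFint.mono_set hsub).norm
    have hsub2 : Set.uIcc a t ⊆ Set.Icc a b := by
      rw [Set.uIcc_of_le hat]
      exact Set.Icc_subset_Icc le_rfl ht.2
    have hgint : IntervalIntegrable g volume a t :=
      (hgcont.mono hsub2).intervalIntegrable
    have h0 : φ t = ‖(π a - πε a) + ∫ s in a..t, (F s - Fε s)‖ := by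
      show ‖π t - πε t‖ = _
      rw [heq]
    calc φ t = ‖(π a - πε a) + ∫ s in a..t, (F s - Fε s)‖ := h0
      _ ≤ ‖π a - πε a‖ + ‖∫ s in a..t, (F s - Fε s)‖ := norm_add_le _ _
      _ ≤ φ a + ∫ s in a..t, ‖F s - Fε s‖ := by
          refine add_le_add_right (intervalIntegral.norm_integral_le_integral_norm hat) _
      _ ≤ φ a + ∫ s in a..t, g s := by
          refine add_le_add_right ?_ _
          refine intervalIntegral.integral_mono_on hat hnormint hgint ?_
          intro x hx
          exact hkey x ⟨hx.1, hx.2.trans ht.2⟩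
  -- Step C : Gronwall
  set ψ : ℝ → ℝ := fun t => φ a + ∫ s in a..t, g s with hψ
  have hgIntOn : IntegrableOn g (Set.uIcc a b) volume := by
    rw [Set.uIcc_of_le hab.le]
    exact hgcont.integrableOn_Icc
  have hψcont : ContinuousOn ψ (Set.Icc a b) := by
    rw [hψ]
    refine continuousOn_const.add ?_
    have := intervalIntegral.continuousOn_primitive_interval (a := a) (b := b) hgIntOn
    rwa [Set.uIcc_of_le hab.le] at this
  have hψderiv : ∀ x ∈ Set.Ico a b, HasDerivWithinAt ψ (g x) (Set.Ici x) x := by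
    intro x hx
    have hxb : x < b := hx.2
    have hIcc_mem : Set.Icc a b ∈ nhdsWithin x (Set.Ioi x) := by
      refine mem_nhdsWithin.2 ⟨Set.Iio b, isOpen_Iio, hxb, ?_⟩
      intro z hz
      exact ⟨hx.1.trans (le_of_lt hz.2), le_of_lt hz.1⟩
    have hsubx : Set.uIcc a x ⊆ Set.Icc a b := by
      rw [Set.uIcc_of_le hx.1]
      exact Set.Icc_subset_Icc le_rfl hxb.le
    have hgi : IntervalIntegrable g volume a x :=
      (hgcont.mono hsubx).intervalIntegrable
    have hmeas : StronglyMeasurableAtFilter g (nhdsWithin x (Set.Ioi x)) volume :=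
      ⟨Set.Icc a b, hIcc_mem, (hgcont.aestronglyMeasurable measurableSet_Icc)⟩
    have hcx : ContinuousWithinAt g (Set.Ioi x) x := by
      have h0 : ContinuousWithinAt g (Set.Icc a b) x :=
        hgcont.continuousWithinAt ⟨hx.1, hxb.le⟩
      exact h0.mono_of_mem_nhdsWithin hIcc_mem
    have := intervalIntegral.integral_hasDerivWithinAt_right (f := g)
      (s := Set.Ici x) (t := Set.Ioi x) hgi hmeas hcx
    simpa [hψ] using this.const_add (φ a)
  have hφψ : ∀ t ∈ Set.Icc a b, φ t ≤ ψ t := hstepB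
  have hliminf : ∀ x ∈ Set.Ico a b, ∀ r, g x < r →
      ∃ᶠ z in nhdsWithin x (Set.Ioi x), (z - x)⁻¹ * (ψ z - ψ x) < r := by
    intro x hx r hr
    have hslope : Filter.Tendsto (slope ψ x) (nhdsWithin x (Set.Ioi x)) (nhds (g x)) := by
      have h := (hψderiv x hx)
      rw [hasDerivWithinAt_iff_tendsto_slope] at h
      rwa [Set.Ici_sdiff_left] at h
    have : ∀ᶠ z in nhdsWithin x (Set.Ioi x), slope ψ x z < r :=
      hslope.eventually_lt_const hr
    refine this.frequently.mono ?_
    intro z hz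
    simpa [slope_def_field, div_eq_inv_mul] using hz
  have hbound : ∀ x ∈ Set.Ico a b, g x ≤ 4 * C * ψ x + 2 * δ := by
    intro x hx
    have h1 := hφψ x ⟨hx.1, hx.2.le⟩
    have h4C : (0:ℝ) ≤ 4 * C := by linarith
    show 4 * C * φ x + 2 * δ ≤ 4 * C * ψ x + 2 * δ
    nlinarith
  have hψa : ψ a ≤ φ a := by
    simp [hψ, intervalIntegral.integral_same]
  have hgron := le_gronwallBound_of_liminf_deriv_right_le (f := ψ) (f' := g)
    (δ := φ a) (K := 4 * C) (ε := 2 * δ) hψcont hliminf hψa hbound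
  -- conclude
  intro t ht
  have hta : 0 ≤ t - a := by linarith [ht.1]
  have h1 : φ t ≤ gronwallBound (φ a) (4 * C) (2 * δ) (t - a) :=
    (hφψ t ht).trans (hgron t ht)
  have h2 : gronwallBound (φ a) (4 * C) (2 * δ) (t - a) ≤
      (φ a + 2 * δ * (t - a)) * Real.exp (4 * C * (t - a)) := by
    rcases eq_or_ne (4 * C) 0 with hK | hK
    · rw [hK, gronwallBound_K0]
      simp only [hK, zero_mul, Real.exp_zero, mul_one]
      norm_num
    · have hKpos : 0 < 4 * C := lt_of_le_of_ne (by linarith) (Ne.symm hK)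
      rw [gronwallBound_of_K_ne_0 hK]
      have hy : 0 ≤ 4 * C * (t - a) := mul_nonneg hKpos.le hta
      have hexp := exp_aux hy
      have hdiv : 2 * δ / (4 * C) * (Real.exp (4 * C * (t - a)) - 1)
          ≤ 2 * δ * (t - a) * Real.exp (4 * C * (t - a)) := by
        rw [div_mul_eq_mul_div, div_le_iff₀ hKpos]
        have h2δ : (0:ℝ) ≤ 2 * δ := by linarith
        calc 2 * δ * (Real.exp (4 * C * (t - a)) - 1)
            ≤ 2 * δ * (4 * C * (t - a) * Real.exp (4 * C * (t - a))) :=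
              mul_le_mul_of_nonneg_left hexp h2δ
          _ = 2 * δ * (t - a) * Real.exp (4 * C * (t - a)) * (4 * C) := by ring
      have hφa : 0 ≤ φ a := hφnonneg a
      nlinarith [Real.exp_pos (4 * C * (t - a))]
  exact h1.trans h2
end
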